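/- For every N ≥ 1 and every k ≥ 1, the identity Q_k(x|a)² + 2 Σ_{i=1}^{k} (−1)^i Q_{k+i}(x|a) Q_{k−i}(x|a) + Σ_{r=k}^{2k−1} Σ_{s=0}^{2k−1−r} f_{k,k}^{r,s}(a) Q_r(x|a) Q_s(x|a) = 0 holds in the polynomial ring ℤ[a_2,…,a_{2k}][x_1,…,x_N]. -/

import Mathlib

open Finset

noncomputable section

/-- The ambient polynomial ring `ℤ[x_1,…,x_N; a_2,a_3,…]`: the variable `Sum.inl i`
is `x_{i+1}`, and `Sum.inr j` is the parameter `a_{j+2}`. -/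
abbrev QRing (N : ℕ) := MvPolynomial (Fin N ⊕ ℕ) ℤ

/-- The variable `x_i` (0-indexed). -/
def xv (N : ℕ) (i : Fin N) : QRing N := MvPolynomial.X (Sum.inl i)

/-- The parameter `a_m` for `m ≥ 2`; `a_1 = 0`. -/
def av (N : ℕ) (m : ℕ) : QRing N :=
  if 2 ≤ m then MvPolynomial.X (Sum.inr (m - 2)) else 0

/-- The generating series `∏_{i=1}^N (1+x_i z)/(1−x_i z)`. -/
def genSeries (N : ℕ) : PowerSeries (QRing N) :=
  ∏ i : Fin N,
    (1 + PowerSeries.C (xv N i) * PowerSeries.X) *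
      PowerSeries.invOfUnit (1 - PowerSeries.C (xv N i) * PowerSeries.X) 1

/-- The Schur Q-polynomial `Q_m(x)`: the coefficient of `z^m` in
`∏_{i=1}^N (1+x_i z)/(1−x_i z)`. -/
def Qone (N m : ℕ) : QRing N := PowerSeries.coeff m (genSeries N)

/-- Elementary symmetric polynomial `e_j` in the parameters `a_m`, `m ∈ s`. -/
def esymA (N : ℕ) (s : Finset ℕ) (j : ℕ) : QRing N :=
  ∑ t ∈ s.powersetCard j, ∏ m ∈ t, av N m

/-- Complete homogeneous symmetric polynomial `h_m` in the parameters `a_i`, `i ∈ s`. -/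
def hsymA (N : ℕ) (s : Finset ℕ) (m : ℕ) : QRing N :=
  ∑ t ∈ s.sym m, ((t : Multiset ℕ).map (av N)).prod

/-- The one-row factorial Schur Q-polynomial
`Q_m(x|a) = Σ_{j=0}^{m−1} (−1)^j e_j(a_2,…,a_m) Q_{m−j}(x)` for `m ≥ 1`, `Q_0(x|a) = 1`. -/
def Qfact (N m : ℕ) : QRing N :=
  if m = 0 then 1 else
    ∑ j ∈ range m, (-1) ^ j * esymA N (Icc 2 m) j * Qone N (m - j)

/-- The coefficient `f_{k,ℓ}^{r,s}(a) = (−1)^{ℓ−s} Σ_{j=0}^{k+ℓ−r−s}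
2 h_{k+ℓ−r−s−j}(a_{k+1},…,a_{r+1}) e_j(a_{s+2},…,a_ℓ)`. -/
def fco (N k l r s : ℕ) : QRing N :=
  (-1) ^ (l - s) *
    ∑ j ∈ range (k + l - r - s + 1),
      2 * hsymA N (Icc (k + 1) (r + 1)) (k + l - r - s - j) * esymA N (Icc (s + 2) l) j

/-- The two-row factorial Schur Q-polynomial `Q_{k,ℓ}(x|a)` for `k ≥ ℓ ≥ 1`. -/
def Qfact2 (N k l : ℕ) : QRing N :=
  Qfact N k * Qfact N l +
    2 * ∑ i ∈ Icc 1 l, (-1) ^ i * Qfact N (k + i) * Qfact N (l - i) +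
    ∑ r ∈ Icc k (k + l - 1), ∑ s ∈ range (k + l - r),
      fco N k l r s * Qfact N r * Qfact N s

/-!
Write `G(z) = ∏ (1 + x_i z)/(1 - x_i z)` and `E_j(z) = ∏_{i=2}^{j} (1 - a_i z)`
(`paramProd N j`), and let `c_j(t) = Qcoeff N j t` be the coefficient of `z^t` in `G(z) E_j(z)`,
so that `Q_m(x|a) = c_m(m)`. Since `G(z) G(-z) = 1`, the series
`(G E_k)(-z) (G E_k)(z) = ∏_{i=2}^{k} (1 - a_i² z²)` has no `z^{2k}` term, that is,
`∑_m (-1)^m c_k(m) c_k(2k-m) = 0`. The recursion `c_{j+1}(t+1) = c_j(t+1) - a_{j+1} c_j(t)`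
expands `c_k(m)` for `m ≥ k` in the `Q_r(x|a)`, `r ≥ k`, with coefficients
`h_{m-r}(a_{k+1},…,a_{r+1})`, and `c_k(t)` for `t ≤ k` in the `Q_s(x|a)`, `s ≤ t`, with
coefficients `± e_{t-s}(a_{s+2},…,a_k)`. Substituting into the vanishing sum, folded at its
symmetric middle term `m = k`, and collecting the coefficient of `Q_r(x|a) Q_s(x|a)` produces
exactly `f_{k,k}^{r,s}(a)`.
-/

open PowerSeries

section SymmetricFunctions

variable {N : ℕ}

@[simp] lemma esymA_zero (s : Finset ℕ) : esymA N s 0 = 1 := by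
  simp [esymA]

lemma esymA_eq_zero_of_card_lt {s : Finset ℕ} {j : ℕ} (h : #s < j) : esymA N s j = 0 := by
  rw [esymA, powersetCard_eq_empty.2 h, sum_empty]

lemma esymA_insert_succ {b : ℕ} {s : Finset ℕ} (hb : b ∉ s) (j : ℕ) :
    esymA N (insert b s) (j + 1) = esymA N s (j + 1) + av N b * esymA N s j := by
  have hb' : ∀ t ∈ s.powersetCard j, b ∉ t := fun t ht hbt =>
    hb ((mem_powersetCard.1 ht).1 hbt)
  rw [esymA, powersetCard_succ_insert hb, sum_union, sum_image, esymA, esymA, mul_sum]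
  · exact congrArg _ (sum_congr rfl fun t ht => prod_insert (hb' t ht))
  · intro t₁ h₁ t₂ h₂ h
    simpa [erase_insert (hb' t₁ h₁), erase_insert (hb' t₂ h₂)] using congrArg (erase · b) h
  · refine disjoint_left.2 fun t ht ht' => ?_
    obtain ⟨u, -, rfl⟩ := mem_image.1 ht'
    exact hb ((mem_powersetCard.1 ht).1 (mem_insert_self b u))

@[simp] lemma hsymA_zero (s : Finset ℕ) : hsymA N s 0 = 1 := by
  rw [hsymA, sym_zero, sum_singleton]
  rfl

@[simp] lemma hsymA_empty_succ (n : ℕ) : hsymA N ∅ (n + 1) = 0 := by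
  rw [hsymA, sym_empty, sum_empty]

lemma hsymA_insert_succ {b : ℕ} {s : Finset ℕ} (hb : b ∉ s) (n : ℕ) :
    hsymA N (insert b s) (n + 1) = hsymA N s (n + 1) + av N b * hsymA N (insert b s) n := by
  have hfree : ((insert b s).sym (n + 1)).filter (b ∉ ·) = s.sym (n + 1) := by
    ext t
    simp only [mem_filter, mem_sym_iff, mem_insert]
    constructor
    · rintro ⟨h, hbt⟩ a ha
      exact (h a ha).resolve_left (by rintro rfl; exact hbt ha)
    · exact fun h => ⟨fun a ha => Or.inr (h a ha), fun hbt => hb (h b hbt)⟩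
  have hcons :
      ((insert b s).sym (n + 1)).filter (b ∈ ·) = ((insert b s).sym n).image (b ::ₛ ·) := by
    ext t
    simp only [mem_filter, mem_image, mem_sym_iff]
    constructor
    · rintro ⟨h, hbt⟩
      refine ⟨t.erase b hbt, fun a ha => h a ?_, Sym.cons_erase hbt⟩
      exact Multiset.mem_of_mem_erase (b := b) (Sym.coe_erase hbt ▸ ha)
    · rintro ⟨u, hu, rfl⟩
      refine ⟨fun a ha => ?_, Sym.mem_cons_self _ _⟩
      rcases Sym.mem_cons.1 ha with rfl | ha
      exacts [mem_insert_self _ _, hu a ha]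
  rw [hsymA, ← sum_filter_not_add_sum_filter _ (b ∈ ·), hfree, hcons,
    sum_image fun _ _ _ _ h => (Sym.cons_inj_right _ _ _).1 h, hsymA, hsymA, mul_sum]
  simp [Sym.coe_cons]

end SymmetricFunctions

section PowerSeriesLemmas

variable {R : Type*} [CommRing R]

lemma coeff_succ_one_sub_C_mul_X_mul (a : R) (f : PowerSeries R) (n : ℕ) :
    coeff (n + 1) ((1 - C a * X) * f) = coeff (n + 1) f - a * coeff n f := by
  rw [sub_mul, one_mul, map_sub, mul_assoc, coeff_C_mul, coeff_succ_X_mul]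

lemma coeff_zero_one_sub_C_mul_X_mul (a : R) (f : PowerSeries R) :
    coeff 0 ((1 - C a * X) * f) = coeff 0 f := by
  simp

lemma coeff_prod_one_sub_C_mul_X_sq_eq_zero_of_lt {ι : Type*} (s : Finset ι) (b : ι → R)
    {n : ℕ} (hn : 2 * #s < n) : coeff n (∏ i ∈ s, (1 - C (b i) * X ^ 2)) = 0 := by
  classical
  induction s using Finset.induction_on generalizing n with
  | empty => simp [coeff_one, show n ≠ 0 by omega]
  | @insert c s hc ih =>
    rw [card_insert_of_notMem hc] at hn
    rw [prod_insert hc, sub_mul, one_mul, map_sub, mul_assoc, coeff_C_mul, coeff_X_pow_mul',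
      if_pos (by omega), ih (by omega), ih (by omega), mul_zero, sub_zero]

lemma coeff_rescale_neg_one_mul (f g : PowerSeries R) (n : ℕ) :
    coeff n (rescale (-1) f * g) =
      ∑ m ∈ range (n + 1), (-1) ^ m * coeff m f * coeff (n - m) g := by
  rw [coeff_mul, Nat.sum_antidiagonal_eq_sum_range_succ_mk]
  simp only [coeff_rescale]

lemma rescale_C (a x : R) : rescale a (C x) = C x := by
  ext n
  rcases n with _ | n <;> simp [coeff_rescale, coeff_C]

lemma rescale_neg_one_one_sub_C_mul_X (x : R) : rescale (-1) (1 - C x * X) = 1 + C x * X := by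
  simp [rescale_C]

lemma rescale_neg_one_one_add_C_mul_X (x : R) : rescale (-1) (1 + C x * X) = 1 - C x * X := by
  simp [rescale_C, sub_eq_add_neg]

lemma rescale_neg_one_one_add_mul_invOfUnit_mul_self (x : R) :
    rescale (-1) ((1 + C x * X) * invOfUnit (1 - C x * X) 1) *
      ((1 + C x * X) * invOfUnit (1 - C x * X) 1) = 1 := by
  set B := invOfUnit (1 - C x * X) 1
  have hB : (1 - C x * X) * B = 1 := mul_invOfUnit _ 1 (by simp)
  calc rescale (-1) ((1 + C x * X) * B) * ((1 + C x * X) * B)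
      = rescale (-1) ((1 - C x * X) * B) * ((1 - C x * X) * B) := by
        simp only [map_mul, rescale_neg_one_one_add_C_mul_X, rescale_neg_one_one_sub_C_mul_X]
        ring
    _ = 1 := by rw [hB, map_one, one_mul]

end PowerSeriesLemmas

section Reindexing

variable {M : Type*} [AddCommMonoid M]

lemma sum_Icc_eq_sum_range_reflect (f : ℕ → M) (a b : ℕ) :
    ∑ m ∈ Icc a b, f m = ∑ j ∈ range (b + 1 - a), f (b - j) :=
  sum_nbij' (b - ·) (b - ·) (fun m hm => by simp only [mem_Icc, mem_range] at hm ⊢; omega)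
    (fun j hj => by simp only [mem_Icc, mem_range] at hj ⊢; omega)
    (fun m hm => by simp only [mem_Icc] at hm; omega)
    (fun j hj => by simp only [mem_range] at hj; omega)
    (fun m hm => congrArg f (by simp only [mem_Icc] at hm; omega))

lemma sum_range_two_mul_add_one_add_eq_of_symm (u : ℕ → M) (k : ℕ)
    (hu : ∀ m ≤ 2 * k, u (2 * k - m) = u m) :
    ∑ m ∈ range (2 * k + 1), u m + u k = 2 • ∑ m ∈ Icc k (2 * k), u m := by
  have hlow : ∑ m ∈ range k, u m = ∑ m ∈ Icc (k + 1) (2 * k), u m := by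
    rw [sum_Icc_eq_sum_range_reflect, show 2 * k + 1 - (k + 1) = k by omega]
    exact sum_congr rfl fun m hm => (hu m (by simp at hm; omega)).symm
  rw [← sum_range_add_sum_Ico _ (by omega : k ≤ 2 * k + 1), Ico_add_one_right_eq_Icc, hlow,
    ← insert_Icc_add_one_left_eq_Icc (by omega : k ≤ 2 * k), sum_insert (by simp), two_nsmul]
  abel

lemma sum_Icc_sum_Icc_sum_range_comm (f : ℕ → ℕ → ℕ → M) (k n : ℕ) :
    ∑ m ∈ Icc k n, ∑ r ∈ Icc k m, ∑ s ∈ range (n - m + 1), f m r s =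
      ∑ r ∈ Icc k n, ∑ s ∈ range (n - r + 1), ∑ j ∈ range (n - r - s + 1),
        f (n - s - j) r s := by
  rw [sum_comm' (t' := Icc k n) (s' := fun r => Icc r n)
    (fun _ _ => by simp only [mem_Icc]; omega)]
  refine sum_congr rfl fun r hr => ?_
  rw [sum_comm' (t' := range (n - r + 1)) (s' := fun s => Icc r (n - s))
    (fun _ _ => by simp only [mem_Icc, mem_range]; omega)]
  refine sum_congr rfl fun s hs => ?_
  rw [sum_Icc_eq_sum_range_reflect, show n - s + 1 - r = n - r - s + 1 by
    simp only [mem_Icc, mem_range] at hr hs; omega]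

lemma sum_Icc_sum_range_eq_sum_Icc_add {n : ℕ} (hn : 1 ≤ n) (k : ℕ) (f : ℕ → ℕ → M) :
    ∑ r ∈ Icc k n, ∑ s ∈ range (n - r + 1), f r s =
      ∑ r ∈ Icc k n, f r (n - r) +
        ∑ r ∈ Icc k (n - 1), ∑ s ∈ range (n - 1 - r + 1), f r s := by
  have hinner : ∑ r ∈ Icc k (n - 1), ∑ s ∈ range (n - 1 - r + 1), f r s =
      ∑ r ∈ Icc k n, ∑ s ∈ range (n - r), f r s := by
    rw [← sum_subset (Icc_subset_Icc_right (Nat.sub_le n 1))]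
    · exact sum_congr rfl fun r hr => by
        rw [show n - 1 - r + 1 = n - r by simp only [mem_Icc] at hr; omega]
    · intro r hr hr'
      simp only [mem_Icc] at hr hr'
      rw [show n - r = 0 by omega, sum_range_zero]
  rw [hinner, add_comm, ← sum_add_distrib]
  exact sum_congr rfl fun r _ => sum_range_succ _ _

end Reindexing

section FactorialCoefficients

variable {N : ℕ}

def paramProd (N j : ℕ) : PowerSeries (QRing N) := ∏ i ∈ Icc 2 j, (1 - C (av N i) * X)

def Qcoeff (N j t : ℕ) : QRing N := coeff t (genSeries N * paramProd N j)

lemma coeff_prod_one_sub_C_av_mul_X (s : Finset ℕ) (j : ℕ) :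
    coeff j (∏ i ∈ s, (1 - C (av N i) * X)) = (-1) ^ j * esymA N s j := by
  induction s using Finset.induction_on generalizing j with
  | empty =>
    rcases j with _ | j
    · simp
    · rw [prod_empty, coeff_one, if_neg j.succ_ne_zero, esymA_eq_zero_of_card_lt (by simp),
        mul_zero]
  | @insert c s hc ih =>
    rw [prod_insert hc]
    rcases j with _ | j
    · simp [coeff_zero_one_sub_C_mul_X_mul, ih]
    · rw [coeff_succ_one_sub_C_mul_X_mul, ih, ih, esymA_insert_succ hc, pow_succ]
      ring

-- Since `a_1 = 0`, this also holds for `j = 0`.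
lemma paramProd_succ (j : ℕ) :
    paramProd N (j + 1) = (1 - C (av N (j + 1)) * X) * paramProd N j := by
  rcases Nat.eq_zero_or_pos j with rfl | hj
  · simp [paramProd, av]
  · rw [paramProd, paramProd, ← insert_Icc_right_eq_Icc_add_one (by omega),
      prod_insert (by simp)]

lemma Qcoeff_succ_succ (j t : ℕ) :
    Qcoeff N (j + 1) (t + 1) = Qcoeff N j (t + 1) - av N (j + 1) * Qcoeff N j t := by
  rw [Qcoeff, paramProd_succ, mul_left_comm, coeff_succ_one_sub_C_mul_X_mul]
  rfl

@[simp] lemma Qcoeff_zero (j : ℕ) : Qcoeff N j 0 = 1 := by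
  simp [Qcoeff, coeff_zero_eq_constantCoeff_apply, paramProd, genSeries, constantCoeff_invOfUnit]

lemma Qfact_eq_Qcoeff (m : ℕ) : Qfact N m = Qcoeff N m m := by
  rcases Nat.eq_zero_or_pos m with rfl | hm
  · simp [Qfact]
  · rw [Qfact, if_neg hm.ne', Qcoeff, mul_comm, coeff_mul,
      Nat.sum_antidiagonal_eq_sum_range_succ_mk, sum_range_succ,
      paramProd, coeff_prod_one_sub_C_av_mul_X, esymA_eq_zero_of_card_lt (by simp; omega)]
    simp [coeff_prod_one_sub_C_av_mul_X, Qone, mul_assoc]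

lemma Qcoeff_eq_sum_esymA : ∀ {j t : ℕ}, t ≤ j →
    Qcoeff N j t =
      ∑ s ∈ range (t + 1), (-1) ^ (t - s) * esymA N (Icc (s + 2) j) (t - s) * Qfact N s
  | _, 0, _ => by simp [Qfact]
  | 0, _ + 1, h => absurd h (by omega)
  | j + 1, t + 1, h => by
    rcases (Nat.le_of_succ_le_succ h).eq_or_lt with rfl | ht
    · rw [sum_range_succ, sum_eq_zero, Qfact_eq_Qcoeff]
      · simp
      intro s hs
      rw [mem_range] at hs
      rw [esymA_eq_zero_of_card_lt (by simp; omega), mul_zero, zero_mul]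
    · have hterm : ∀ s ∈ range (t + 1),
          (-1) ^ (t + 1 - s) * esymA N (Icc (s + 2) (j + 1)) (t + 1 - s) * Qfact N s =
            (-1) ^ (t + 1 - s) * esymA N (Icc (s + 2) j) (t + 1 - s) * Qfact N s -
              av N (j + 1) * ((-1) ^ (t - s) * esymA N (Icc (s + 2) j) (t - s) * Qfact N s) := by
        intro s hs
        rw [mem_range] at hs
        rw [← insert_Icc_right_eq_Icc_add_one (by omega), show t + 1 - s = t - s + 1 by omega,
          esymA_insert_succ (by simp), pow_succ]
        ring
      rw [Qcoeff_succ_succ, Qcoeff_eq_sum_esymA (by omega : t + 1 ≤ j),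
        Qcoeff_eq_sum_esymA ht.le, sum_range_succ, sum_range_succ _ (t + 1),
        sum_congr rfl hterm, sum_sub_distrib, mul_sum]
      simp only [Nat.sub_self, pow_zero, esymA_zero, one_mul]
      ring

lemma Qcoeff_eq_sum_hsymA {j t : ℕ} (h : j ≤ t) :
    Qcoeff N j t = ∑ r ∈ Icc j t, hsymA N (Icc (j + 1) (r + 1)) (t - r) * Qfact N r := by
  obtain ⟨d, rfl⟩ := Nat.exists_eq_add_of_le h
  induction d generalizing j with
  | zero => simp [Qfact_eq_Qcoeff]
  | succ d ih =>
    have hrec : Qcoeff N j (j + d + 1) =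
        Qcoeff N (j + 1) (j + d + 1) + av N (j + 1) * Qcoeff N j (j + d) := by
      rw [Qcoeff_succ_succ]
      ring
    have hterm : ∀ r ∈ Icc j (j + d),
        hsymA N (Icc (j + 1) (r + 1)) (j + d + 1 - r) * Qfact N r =
          hsymA N (Icc (j + 1 + 1) (r + 1)) (j + d + 1 - r) * Qfact N r +
            av N (j + 1) * (hsymA N (Icc (j + 1) (r + 1)) (j + d - r) * Qfact N r) := by
      intro r hr
      rw [mem_Icc] at hr
      rw [← insert_Icc_add_one_left_eq_Icc (by omega : j + 1 ≤ r + 1),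
        show j + d + 1 - r = j + d - r + 1 by omega, hsymA_insert_succ (by simp)]
      ring
    have hext :
        ∑ r ∈ Icc j (j + d), hsymA N (Icc (j + 1 + 1) (r + 1)) (j + d + 1 - r) * Qfact N r =
          ∑ r ∈ Icc (j + 1) (j + d),
            hsymA N (Icc (j + 1 + 1) (r + 1)) (j + d + 1 - r) * Qfact N r := by
      rw [← insert_Icc_add_one_left_eq_Icc (by omega : j ≤ j + d), sum_insert (by simp),
        Icc_eq_empty_of_lt (Nat.lt_succ_self (j + 1)), show j + d + 1 - j = d + 1 by omega,
        hsymA_empty_succ, zero_mul, zero_add]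
    rw [← add_assoc, hrec, show j + d + 1 = j + 1 + d by omega, ih (by omega), ih (by omega),
      show j + 1 + d = j + d + 1 by omega, sum_Icc_succ_top (by omega), sum_Icc_succ_top (by omega),
      sum_congr rfl hterm, sum_add_distrib, ← mul_sum, hext]
    simp only [Nat.sub_self, hsymA_zero, one_mul]
    ring

lemma rescale_neg_one_genSeries_mul_self : rescale (-1) (genSeries N) * genSeries N = 1 := by
  rw [genSeries, map_prod, ← prod_mul_distrib]
  exact prod_eq_one fun i _ => rescale_neg_one_one_add_mul_invOfUnit_mul_self _

lemma rescale_neg_one_paramProd_mul_self (j : ℕ) :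
    rescale (-1) (paramProd N j) * paramProd N j =
      ∏ i ∈ Icc 2 j, (1 - C (av N i ^ 2) * X ^ 2) := by
  rw [paramProd, map_prod, ← prod_mul_distrib]
  refine prod_congr rfl fun i _ => ?_
  rw [rescale_neg_one_one_sub_C_mul_X, map_pow]
  ring

lemma sum_neg_one_pow_mul_Qcoeff_mul_Qcoeff_eq_zero {j n : ℕ} (h : 2 * (j - 1) < n) :
    ∑ m ∈ range (n + 1), (-1) ^ m * Qcoeff N j m * Qcoeff N j (n - m) = 0 := by
  have hprod : rescale (-1) (genSeries N * paramProd N j) * (genSeries N * paramProd N j) =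
      ∏ i ∈ Icc 2 j, (1 - C (av N i ^ 2) * X ^ 2) := by
    rw [map_mul, mul_mul_mul_comm, rescale_neg_one_genSeries_mul_self, one_mul,
      rescale_neg_one_paramProd_mul_self]
  rw [← coeff_prod_one_sub_C_mul_X_sq_eq_zero_of_lt (Icc 2 j) (fun i => av N i ^ 2) (n := n)
    (by simpa using h), ← hprod, coeff_rescale_neg_one_mul]
  rfl

end FactorialCoefficients

section Relation

variable {N : ℕ}

lemma fco_of_add_eq {k l r s : ℕ} (h : r + s = k + l) : fco N k l r s = 2 * (-1) ^ (l - s) := by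
  rw [fco, show k + l - r - s = 0 by omega, zero_add, sum_range_one]
  simp only [Nat.sub_zero, hsymA_zero, esymA_zero, mul_one]
  ring

lemma neg_one_pow_mul_Qcoeff_mul_Qcoeff_eq_sum {k m : ℕ} (hkm : k ≤ m) (hm : m ≤ 2 * k) :
    (-1) ^ (k + m) * Qcoeff N k m * Qcoeff N k (2 * k - m) =
      ∑ r ∈ Icc k m, ∑ s ∈ range (2 * k - m + 1),
        (-1) ^ (k - s) * hsymA N (Icc (k + 1) (r + 1)) (m - r) *
          esymA N (Icc (s + 2) k) (2 * k - m - s) * (Qfact N r * Qfact N s) := by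
  rw [Qcoeff_eq_sum_hsymA hkm, Qcoeff_eq_sum_esymA (by omega), mul_assoc, sum_mul_sum]
  simp only [mul_sum]
  refine sum_congr rfl fun r _ => sum_congr rfl fun s hs => ?_
  rw [mem_range] at hs
  have hsign : (-1 : QRing N) ^ (k + m) * (-1) ^ (2 * k - m - s) = (-1) ^ (k - s) := by
    rw [← pow_add]
    exact neg_one_pow_congr (by grind)
  rw [← hsign]
  ring

lemma Qfact_sq_eq_two_nsmul_sum_Icc {k : ℕ} (hk : 1 ≤ k) :
    Qfact N k ^ 2 =
      2 • ∑ m ∈ Icc k (2 * k), (-1) ^ (k + m) * Qcoeff N k m * Qcoeff N k (2 * k - m) := by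
  set u : ℕ → QRing N := fun m => (-1) ^ (k + m) * Qcoeff N k m * Qcoeff N k (2 * k - m)
  have hsymm : ∀ m ≤ 2 * k, u (2 * k - m) = u m := by
    intro m hm
    simp only [u, show 2 * k - (2 * k - m) = m by omega]
    rw [neg_one_pow_congr (n := k + m) (by grind)]
    ring
  have hsum : ∑ m ∈ range (2 * k + 1), u m = 0 := by
    have := sum_neg_one_pow_mul_Qcoeff_mul_Qcoeff_eq_zero (N := N) (j := k) (n := 2 * k) (by omega)
    simp only [u, pow_add, mul_assoc, ← mul_sum] at this ⊢
    rw [this, mul_zero]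
  have hu : u k = Qfact N k ^ 2 := by
    simp only [u, (Even.neg_one_pow ⟨k, rfl⟩ : (-1 : QRing N) ^ (k + k) = 1), one_mul,
      show 2 * k - k = k by omega, Qfact_eq_Qcoeff, sq]
  rw [← hu, ← sum_range_two_mul_add_one_add_eq_of_symm u k hsymm, hsum, zero_add]

lemma Qfact_sq_eq_sum_fco {k : ℕ} (hk : 1 ≤ k) :
    Qfact N k ^ 2 = ∑ r ∈ Icc k (2 * k), ∑ s ∈ range (2 * k - r + 1),
      fco N k k r s * Qfact N r * Qfact N s := by
  rw [Qfact_sq_eq_two_nsmul_sum_Icc hk, sum_congr rfl fun m hm =>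
      neg_one_pow_mul_Qcoeff_mul_Qcoeff_eq_sum (mem_Icc.1 hm).1 (mem_Icc.1 hm).2,
    sum_Icc_sum_Icc_sum_range_comm, smul_sum]
  refine sum_congr rfl fun r _ => ?_
  rw [smul_sum]
  refine sum_congr rfl fun s hs => ?_
  rw [mem_range] at hs
  rw [fco, ← two_mul, mul_sum, sum_mul, sum_mul, smul_sum]
  refine sum_congr rfl fun j hj => ?_
  rw [mem_range] at hj
  rw [show 2 * k - s - j - r = 2 * k - r - s - j by omega,
    show 2 * k - (2 * k - s - j) - s = j by omega, nsmul_eq_mul, Nat.cast_ofNat]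
  ring

lemma sum_Icc_fco_antidiagonal (k : ℕ) :
    ∑ r ∈ Icc k (2 * k), fco N k k r (2 * k - r) * Qfact N r * Qfact N (2 * k - r) =
      2 * Qfact N k ^ 2 + 2 * ∑ i ∈ Icc 1 k, (-1) ^ i * Qfact N (k + i) * Qfact N (k - i) := by
  rw [← insert_Icc_add_one_left_eq_Icc (by omega : k ≤ 2 * k), sum_insert (by simp),
    show Icc (k + 1) (2 * k) = (Icc 1 k).map (addLeftEmbedding k) by
      rw [map_add_left_Icc, two_mul], sum_map, mul_sum]
  simp only [addLeftEmbedding_apply]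
  congr 1
  · rw [fco_of_add_eq (by omega), show 2 * k - k = k by omega, Nat.sub_self, sq]
    ring
  · refine sum_congr rfl fun i hi => ?_
    rw [mem_Icc] at hi
    rw [fco_of_add_eq (by omega), show 2 * k - (k + i) = k - i by omega,
      show k - (k - i) = i by omega]
    ring

end Relation

theorem Qfact_sq_relation_general (N : ℕ) (k : ℕ) (hk : 1 ≤ k) :
    Qfact N k ^ 2 +
      2 * ∑ i ∈ Icc 1 k, (-1) ^ i * Qfact N (k + i) * Qfact N (k - i) +
      ∑ r ∈ Icc k (2 * k - 1), ∑ s ∈ range (2 * k - 1 - r + 1),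
        fco N k k r s * Qfact N r * Qfact N s = 0 := by
  have hsq := Qfact_sq_eq_sum_fco (N := N) hk
  rw [sum_Icc_sum_range_eq_sum_Icc_add (by omega), sum_Icc_fco_antidiagonal] at hsq
  linear_combination -hsq

/-- For every `N ≥ 1` and `k ≥ 1`:
`Q_k(x|a)² + 2 Σ_{i=1}^{k} (−1)^i Q_{k+i}(x|a) Q_{k−i}(x|a)
 + Σ_{r=k}^{2k−1} Σ_{s=0}^{2k−1−r} f_{k,k}^{r,s}(a) Q_r(x|a) Q_s(x|a) = 0`. -/
theorem Qfact_sq_relation (N : ℕ) (hN : 1 ≤ N) (k : ℕ) (hk : 1 ≤ k) :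
    Qfact N k ^ 2 +
      2 * ∑ i ∈ Icc 1 k, (-1) ^ i * Qfact N (k + i) * Qfact N (k - i) +
      ∑ r ∈ Icc k (2 * k - 1), ∑ s ∈ range (2 * k - 1 - r + 1),
        fco N k k r s * Qfact N r * Qfact N s = 0 :=
  Qfact_sq_relation_general N k hk

end
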